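/- Let d ≥ 2, let a_1 < a_2 < … < a_d be in (0,1), and define β_0 = -∞, β_i = log((1-a_i)/(1-a_{i+1})) / log(a_{i+1}/a_i) for 1 ≤ i ≤ d-1, and β_d = +∞. Then β_i < β_{i+1} for 1 ≤ i ≤ d-2. -/

import Mathlib

open Real

lemma phi_hasDerivAt {u : ℝ} (hu : u < 0) :
    HasDerivAt (fun u => Real.log (1 - Real.exp u)) (-Real.exp u / (1 - Real.exp u)) u := by
  have h1 : Real.exp u < 1 := Real.exp_lt_one_iff.mpr hu
  have hne : (1 : ℝ) - Real.exp u ≠ 0 := by linarith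
  have h2 : HasDerivAt (fun u => 1 - Real.exp u) (-Real.exp u) u := by
    simpa using (Real.hasDerivAt_exp u).const_sub 1
  exact h2.log hne

lemma phi'_hasDerivAt {u : ℝ} (hu : u < 0) :
    HasDerivAt (fun u => -Real.exp u / (1 - Real.exp u))
      (-Real.exp u / (1 - Real.exp u) ^ 2) u := by
  have h1 : Real.exp u < 1 := Real.exp_lt_one_iff.mpr hu
  have hne : (1 : ℝ) - Real.exp u ≠ 0 := by linarith
  have h2 : HasDerivAt (fun u => -Real.exp u) (-Real.exp u) u := (Real.hasDerivAt_exp u).neg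
  have h3 : HasDerivAt (fun u => 1 - Real.exp u) (-Real.exp u) u := by
    simpa using (Real.hasDerivAt_exp u).const_sub 1
  have h4 := h2.div h3 hne
  refine h4.congr_deriv ?_
  ring

lemma phi_strictConcave :
    StrictConcaveOn ℝ (Set.Iio (0:ℝ)) (fun u => Real.log (1 - Real.exp u)) := by
  apply strictConcaveOn_of_deriv2_neg (convex_Iio 0)
  · intro u hu
    exact ((phi_hasDerivAt hu).continuousAt).continuousWithinAt
  · intro u hu
    rw [interior_Iio] at hu
    have h1 : Real.exp u < 1 := Real.exp_lt_one_iff.mpr hu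
    have heq : deriv (fun u => Real.log (1 - Real.exp u))
        =ᶠ[nhds u] (fun u => -Real.exp u / (1 - Real.exp u)) := by
      filter_upwards [Iio_mem_nhds hu] with v hv
      exact (phi_hasDerivAt hv).deriv
    have : deriv^[2] (fun u => Real.log (1 - Real.exp u)) u
        = -Real.exp u / (1 - Real.exp u) ^ 2 := by
      show deriv (deriv fun u => Real.log (1 - Real.exp u)) u = _
      rw [heq.deriv_eq]
      exact (phi'_hasDerivAt hu).deriv
    rw [this]
    apply div_neg_of_neg_of_pos
    · simpa using Real.exp_pos u
    · exact pow_pos (by linarith : (0:ℝ) < 1 - Real.exp u) 2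

theorem beta_strict_mono (d : ℕ) (hd : 2 ≤ d) (a : ℕ → ℝ)
    (hbounds : ∀ i, 1 ≤ i → i ≤ d → a i ∈ Set.Ioo (0:ℝ) 1)
    (hmono : ∀ i j, 1 ≤ i → i < j → j ≤ d → a i < a j) :
    ∀ i, 1 ≤ i → i + 1 ≤ d - 1 →
      Real.log ((1 - a i) / (1 - a (i+1))) / Real.log (a (i+1) / a i)
        < Real.log ((1 - a (i+1)) / (1 - a (i+2))) / Real.log (a (i+2) / a (i+1)) := by
  intro i hi hile
  have h2d : i + 2 ≤ d := by omega
  obtain ⟨hx0, hx1⟩ := hbounds i hi (by omega)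
  obtain ⟨hy0, hy1⟩ := hbounds (i+1) (by omega) (by omega)
  obtain ⟨hz0, hz1⟩ := hbounds (i+2) (by omega) h2d
  set x := a i; set y := a (i+1); set z := a (i+2)
  have hxy : x < y := hmono i (i+1) hi (by omega) (by omega)
  have hyz : y < z := hmono (i+1) (i+2) (by omega) (by omega) h2d
  have hlx : Real.log x < Real.log y := Real.log_lt_log hx0 hxy
  have hly : Real.log y < Real.log z := Real.log_lt_log hy0 hyz
  have hlz0 : Real.log z < 0 := Real.log_neg hz0 hz1
  have hlx0 : Real.log x < 0 := by linarith
  have hly0 : Real.log y < 0 := by linarith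
  have hslope := (strictConcaveOn_iff_slope_strict_anti_adjacent.mp phi_strictConcave).2
    (x := Real.log x) (y := Real.log y) (z := Real.log z)
    (Set.mem_Iio.mpr hlx0) (Set.mem_Iio.mpr hlz0) hlx hly
  simp only [Real.exp_log hx0, Real.exp_log hy0, Real.exp_log hz0] at hslope
  have e1 : Real.log ((1 - x) / (1 - y)) = Real.log (1 - x) - Real.log (1 - y) :=
    Real.log_div (by linarith) (by linarith)
  have e2 : Real.log ((1 - y) / (1 - z)) = Real.log (1 - y) - Real.log (1 - z) :=
    Real.log_div (by linarith) (by linarith)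
  have e3 : Real.log (y / x) = Real.log y - Real.log x := Real.log_div (by linarith) (by linarith)
  have e4 : Real.log (z / y) = Real.log z - Real.log y := Real.log_div (by linarith) (by linarith)
  rw [e1, e2, e3, e4]
  have d1 : (0:ℝ) < Real.log y - Real.log x := by linarith
  have d2 : (0:ℝ) < Real.log z - Real.log y := by linarith
  rw [div_lt_div_iff₀ d1 d2]
  rw [div_lt_div_iff₀ d2 d1] at hslope
  nlinarith [hslope]
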